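/- Let Y₁, Y₂, … be i.i.d. with E Y₁² = 1 and E|Y₁|^p < ∞ for some p ∈ (2,3]. Set Vₙ² = ∑_{k=1}^n Y_k². Then limsup_{n→∞} n^{p/2} E[(Y₁²/Vₙ²)^{p/2}] ≤ E|Y₁|^p. Combined with the matching lower bound, n E[(Y₁²/Vₙ²)^{p/2}] ∼ E|Y₁|^p n^{1−p/2}. -/

import Mathlib

open Real MeasureTheory ProbabilityTheory Filter

/-!
Off the event `∑_{k=1}^{n-1} min (Y_k², n^{2/p}) ≤ (1 - ε) n` one has `V_n² > (1 - ε) n`, hence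
`(Y₀² / V_n²)^{p/2} ≤ |Y₀|^p ((1 - ε) n)^{-p/2}`; on it the ratio is at most `1`. So
`n^{p/2} E (Y₀² / V_n²)^{p/2} ≤ n^{p/2} P(event) + (1 - ε)^{-p/2} E|Y₀|^p`, and it suffices that the
event has probability `o(n^{-p/2})`. The truncated squares have mean tending to `E Y₀² = 1` and
second moment at most `n^{(4-p)/p} E|Y₀|^p`, so a Chernoff bound for the lower tail, based on
`e^{-x} ≤ 1 - x + x²` for `x ≥ 0`, bounds the probability by `exp (-c n^{2-4/p})`, which beats every
power of `n` since `p > 2`. Finally let `ε → 0`.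
-/

open Topology

lemma Real.exp_neg_le_one_sub_add_sq {x : ℝ} (hx : 0 ≤ x) : exp (-x) ≤ 1 - x + x ^ 2 := by
  have hx1 : 0 < 1 + x := by linarith
  calc exp (-x) = (exp x)⁻¹ := exp_neg x
    _ ≤ (1 + x)⁻¹ := inv_anti₀ hx1 (by linarith [add_one_le_exp x])
    _ ≤ 1 - x + x ^ 2 := by rw [inv_le_iff_one_le_mul₀ hx1]; nlinarith [pow_nonneg hx 3]

lemma Real.sq_rpow_div_two (x p : ℝ) : (x ^ 2) ^ (p / 2) = |x| ^ p := by
  rw [← sq_abs, ← rpow_natCast, ← rpow_mul (abs_nonneg x)]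
  congr 1
  push_cast
  ring

lemma Real.min_sq_sq_le {x c p : ℝ} (hc : 0 ≤ c) (hp0 : 0 ≤ p) (hp4 : p ≤ 4) :
    min (x ^ 2) c ^ 2 ≤ c ^ ((4 - p) / 2) * |x| ^ p := by
  have hz : 0 ≤ min (x ^ 2) c := le_min (sq_nonneg x) hc
  calc min (x ^ 2) c ^ 2 = min (x ^ 2) c ^ ((4 - p) / 2) * min (x ^ 2) c ^ (p / 2) := by
        rw [← rpow_add' hz (by linarith), show (4 - p) / 2 + p / 2 = (2 : ℕ) by ring, rpow_natCast]
    _ ≤ c ^ ((4 - p) / 2) * (x ^ 2) ^ (p / 2) := by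
        gcongr
        exacts [min_le_right _ _, min_le_left _ _]
    _ = c ^ ((4 - p) / 2) * |x| ^ p := by rw [sq_rpow_div_two]

lemma Real.rpow_div_le_ite_add {x D T a q : ℝ} (hx : 0 ≤ x) (hxD : x ≤ D) (hTD : T ≤ D)
    (ha : 0 < a) (hq : 0 ≤ q) : (x / D) ^ q ≤ (if T ≤ a then 1 else 0) + x ^ q / a ^ q := by
  have hD : 0 ≤ D := hx.trans hxD
  split_ifs with hT
  · have : 0 ≤ x ^ q / a ^ q := by positivity
    linarith [rpow_le_one (div_nonneg hx hD) (div_le_one_of_le₀ hxD hD) hq]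
  · rw [zero_add, ← div_rpow hx ha.le]
    exact rpow_le_rpow (div_nonneg hx hD) (div_le_div_of_nonneg_left hx ha (by linarith)) hq

-- The exponent of `measureReal_sum_le_le_exp_of_nonneg` for `n - 1` summands of mean
-- `m ≥ 1 - ε / 4` and second moment `w ≤ v`, at `t = ε / (4 v)`.
lemma Real.lowerTail_exponent_le {ε n m w v : ℝ} (hε : 0 < ε) (hn1 : 1 ≤ n) (hn : 4 / ε ≤ n)
    (hm : 1 - ε / 4 ≤ m) (hw : w ≤ v) (hv : 0 < v) :
    ε / (4 * v) * ((1 - ε) * n) - (n - 1) * (ε / (4 * v) * m - (ε / (4 * v)) ^ 2 * w) ≤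
      -(ε ^ 2 / 16) * (n / v) := by
  set t := ε / (4 * v) with ht_def
  have ht : 0 < t := by positivity
  have htv : t * v = ε / 4 := by rw [ht_def]; field_simp
  have hεn : 4 ≤ ε * n := by rwa [div_le_iff₀ hε, mul_comm] at hn
  have hstep : t * (1 - ε / 2) ≤ t * m - t ^ 2 * w := by
    nlinarith [mul_le_mul_of_nonneg_left hm ht.le, mul_le_mul_of_nonneg_left hw (sq_nonneg t)]
  calc t * ((1 - ε) * n) - (n - 1) * (t * m - t ^ 2 * w)
      ≤ t * ((1 - ε) * n) - (n - 1) * (t * (1 - ε / 2)) := by gcongr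
    _ = t * (1 - ε / 2 - ε * n / 2) := by ring
    _ ≤ t * (-(ε * n) / 4) := by gcongr; linarith
    _ = -(ε ^ 2 / 16) * (n / v) := by rw [ht_def]; field_simp; ring

lemma Real.tendsto_natCast_rpow_mul_exp_neg_mul_rpow {s b α : ℝ} (hb : 0 < b) (hα : 0 < α) :
    Tendsto (fun n : ℕ => (n : ℝ) ^ s * exp (-b * (n : ℝ) ^ α)) atTop (𝓝 0) := by
  refine ((tendsto_rpow_mul_exp_neg_mul_atTop_nhds_zero (s / α) b hb).comp
    ((tendsto_rpow_atTop hα).comp tendsto_natCast_atTop_atTop)).congr fun n => ?_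
  simp only [Function.comp_apply]
  rw [← rpow_mul n.cast_nonneg, mul_div_cancel₀ s hα.ne']

section Chernoff

variable {Ω ι : Type*} {m : MeasurableSpace Ω} {μ : Measure Ω} [IsProbabilityMeasure μ]

lemma ProbabilityTheory.mgf_neg_le_exp_of_nonneg {X : Ω → ℝ} (hXm : Measurable X)
    (hX0 : ∀ ω, 0 ≤ X ω) (hX2 : Integrable (fun ω => X ω ^ 2) μ) {t : ℝ} (ht : 0 ≤ t) :
    mgf X μ (-t) ≤ exp (-(t * μ[X]) + t ^ 2 * μ[fun ω => X ω ^ 2]) := by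
  have hX : Integrable X μ :=
    ((memLp_two_iff_integrable_sq hXm.aestronglyMeasurable).2 hX2).integrable one_le_two
  have hexp : Integrable (fun ω => exp (-t * X ω)) μ :=
    (integrable_const 1).mono' (by fun_prop) (ae_of_all _ fun ω => by
      rw [norm_of_nonneg (exp_pos _).le, exp_le_one_iff]; nlinarith [hX0 ω])
  have h1 : Integrable (fun ω => 1 - t * X ω) μ := (integrable_const 1).sub (hX.const_mul t)
  calc mgf X μ (-t) ≤ ∫ ω, (1 - t * X ω + t ^ 2 * X ω ^ 2) ∂μ :=
        integral_mono hexp (h1.add (hX2.const_mul _)) fun ω => by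
          simpa [neg_mul, mul_pow] using exp_neg_le_one_sub_add_sq (mul_nonneg ht (hX0 ω))
    _ = -(t * μ[X]) + t ^ 2 * μ[fun ω => X ω ^ 2] + 1 := by
        rw [integral_add h1 (hX2.const_mul _), integral_sub (integrable_const 1) (hX.const_mul t),
          integral_const_mul, integral_const_mul]
        simp only [integral_const, probReal_univ, smul_eq_mul, one_mul]
        ring
    _ ≤ _ := add_one_le_exp _

lemma ProbabilityTheory.measureReal_sum_le_le_exp_of_nonneg {X : ι → Ω → ℝ}
    (hmeas : ∀ i, Measurable (X i)) (hindep : iIndepFun X μ) {j : ι}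
    (hident : ∀ i, IdentDistrib (X i) (X j) μ μ) (hX0 : ∀ i ω, 0 ≤ X i ω)
    (hX2 : Integrable (fun ω => X j ω ^ 2) μ) (s : Finset ι) (a : ℝ) {t : ℝ} (ht : 0 ≤ t) :
    μ.real {ω | ∑ i ∈ s, X i ω ≤ a} ≤
      exp (t * a - s.card * (t * μ[X j] - t ^ 2 * μ[fun ω => X j ω ^ 2])) := by
  have hexp : Integrable (fun ω => exp (-t * (∑ i ∈ s, X i) ω)) μ :=
    (integrable_const 1).mono' (by fun_prop) (ae_of_all _ fun ω => by
      rw [norm_of_nonneg (exp_pos _).le, exp_le_one_iff, Finset.sum_apply]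
      nlinarith [Finset.sum_nonneg fun i (_ : i ∈ s) => hX0 i ω])
  calc μ.real {ω | ∑ i ∈ s, X i ω ≤ a} ≤ exp (t * a) * mgf (∑ i ∈ s, X i) μ (-t) := by
        simpa [Finset.sum_apply] using measure_le_le_exp_mul_mgf a (neg_nonpos.2 ht) hexp
    _ = exp (t * a) * mgf (X j) μ (-t) ^ s.card := by
        rw [hindep.mgf_sum hmeas, Finset.prod_eq_pow_card fun i _ =>
          mgf_congr_of_identDistrib _ _ (hident i) _]
    _ ≤ exp (t * a) * exp (-(t * μ[X j]) + t ^ 2 * μ[fun ω => X j ω ^ 2]) ^ s.card := by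
        gcongr
        exacts [mgf_nonneg, mgf_neg_le_exp_of_nonneg (hmeas j) (hX0 j) hX2 ht]
    _ = _ := by rw [← exp_nat_mul, ← exp_add]; ring_nf

end Chernoff

lemma MeasureTheory.tendsto_integral_min_sq {Ω : Type*} {m : MeasurableSpace Ω} {μ : Measure Ω}
    {X : Ω → ℝ} (hX2 : Integrable (fun ω => X ω ^ 2) μ) {c : ℕ → ℝ} (hc : Tendsto c atTop atTop) :
    Tendsto (fun n => ∫ ω, min (X ω ^ 2) (c n) ∂μ) atTop (𝓝 (∫ ω, X ω ^ 2 ∂μ)) := by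
  refine tendsto_integral_filter_of_dominated_convergence (fun ω => X ω ^ 2)
    (.of_forall fun n => hX2.aestronglyMeasurable.inf aestronglyMeasurable_const) ?_ hX2
    (ae_of_all _ fun ω => tendsto_const_nhds.congr' ?_)
  · filter_upwards [hc.eventually_ge_atTop 0] with n hn
    exact ae_of_all _ fun ω => by
      rw [norm_of_nonneg (le_min (sq_nonneg _) hn)]; exact min_le_left _ _
  · filter_upwards [hc.eventually_ge_atTop (X ω ^ 2)] with n hn
    exact (min_eq_left hn).symm

section TruncatedSums

variable {Ω : Type*}

-- `∑_{k=1}^{n-1} Ỹ_{k,n}²` for the paper's truncation `Ỹ_{k,n} = |Y_k| ∧ n^{1/p}`; the paper's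
-- `Y₁` is `Y 0` here.
noncomputable def truncSqSum (Y : ℕ → Ω → ℝ) (p : ℝ) (n : ℕ) (ω : Ω) : ℝ :=
  ∑ k ∈ Finset.Ico 1 n, min (Y k ω ^ 2) ((n : ℝ) ^ (2 / p))

lemma truncSqSum_le_sum_sq (Y : ℕ → Ω → ℝ) (p : ℝ) (n : ℕ) (ω : Ω) :
    truncSqSum Y p n ω ≤ ∑ k ∈ Finset.range n, Y k ω ^ 2 :=
  (Finset.sum_le_sum fun k _ => min_le_left _ _).trans <|
    Finset.sum_le_sum_of_subset_of_nonneg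
      (by rw [Finset.range_eq_Ico]; exact Finset.Ico_subset_Ico_left zero_le_one)
      fun _ _ _ => sq_nonneg _

variable [MeasureSpace Ω] [IsProbabilityMeasure (ℙ : Measure Ω)] {Y : ℕ → Ω → ℝ} {p : ℝ}

lemma measureReal_truncSqSum_le_exp (hmeas : ∀ i, Measurable (Y i))
    (hindep : iIndepFun Y ℙ) (hident : ∀ i, IdentDistrib (Y i) (Y 0) ℙ ℙ) (hp0 : 0 < p)
    (hp4 : p ≤ 4) (hintp : Integrable (fun ω => |Y 0 ω| ^ p) ℙ) {M : ℝ} (hM : 0 < M)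
    (hMp : ∫ ω, |Y 0 ω| ^ p ≤ M) {ε : ℝ} (hε : 0 < ε) {n : ℕ} (hn : 1 ≤ n) (hn4 : 4 / ε ≤ n)
    (hmean : 1 - ε / 4 ≤ ∫ ω, min (Y 0 ω ^ 2) ((n : ℝ) ^ (2 / p))) :
    (ℙ : Measure Ω).real {ω | truncSqSum Y p n ω ≤ (1 - ε) * n} ≤
      exp (-(ε ^ 2 / (16 * M)) * (n : ℝ) ^ (2 - 4 / p)) := by
  have hn0 : (0 : ℝ) < n := by exact_mod_cast hn
  set c := (n : ℝ) ^ (2 / p)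
  set B := c ^ ((4 - p) / 2)
  have hc : 0 < c := rpow_pos_of_pos hn0 _
  have hB : 0 < B := rpow_pos_of_pos hc _
  have hg : Measurable fun x : ℝ => min (x ^ 2) c := by fun_prop
  have hsq_le : ∀ ω, min (Y 0 ω ^ 2) c ^ 2 ≤ B * |Y 0 ω| ^ p := fun ω =>
    min_sq_sq_le hc.le hp0.le hp4
  have hsq_int : Integrable (fun ω => min (Y 0 ω ^ 2) c ^ 2) ℙ :=
    (hintp.const_mul B).mono' (by fun_prop) (ae_of_all _ fun ω => by
      rw [norm_of_nonneg (sq_nonneg _)]; exact hsq_le ω)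
  have hsecond : ∫ ω, min (Y 0 ω ^ 2) c ^ 2 ≤ B * M :=
    calc ∫ ω, min (Y 0 ω ^ 2) c ^ 2 ≤ ∫ ω, B * |Y 0 ω| ^ p :=
          integral_mono hsq_int (hintp.const_mul _) hsq_le
      _ ≤ B * M := by rw [integral_const_mul]; gcongr
  have hnB : (n : ℝ) / B = (n : ℝ) ^ (2 - 4 / p) := by
    rw [div_eq_iff hB.ne']
    simp only [B, c]
    rw [← rpow_mul hn0.le, ← rpow_add hn0]
    conv_lhs => rw [← rpow_one (n : ℝ)]
    congr 1; field_simp; ring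
  calc (ℙ : Measure Ω).real {ω | truncSqSum Y p n ω ≤ (1 - ε) * n}
      ≤ exp (ε / (4 * (B * M)) * ((1 - ε) * n) - (Finset.Ico 1 n).card *
          (ε / (4 * (B * M)) * (∫ ω, min (Y 0 ω ^ 2) c) -
            (ε / (4 * (B * M))) ^ 2 * ∫ ω, min (Y 0 ω ^ 2) c ^ 2)) :=
        measureReal_sum_le_le_exp_of_nonneg (X := fun k ω => min (Y k ω ^ 2) c)
          (fun k => hg.comp (hmeas k)) (hindep.comp _ fun _ => hg)
          (fun k => (hident k).comp hg) (fun k ω => le_min (sq_nonneg _) hc.le)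
          hsq_int _ _ (by positivity)
    _ ≤ exp (-(ε ^ 2 / 16) * (n / (B * M))) := by
        rw [Nat.card_Ico, Nat.cast_sub hn, Nat.cast_one]
        exact exp_le_exp.2 (lowerTail_exponent_le hε (by exact_mod_cast hn) hn4 hmean hsecond
          (by positivity))
    _ = exp (-(ε ^ 2 / (16 * M)) * (n : ℝ) ^ (2 - 4 / p)) := by
        rw [← hnB]; congr 1; field_simp

lemma tendsto_rpow_mul_measureReal_truncSqSum_le (hmeas : ∀ i, Measurable (Y i))
    (hindep : iIndepFun Y ℙ) (hident : ∀ i, IdentDistrib (Y i) (Y 0) ℙ ℙ)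
    (hvar : ∫ ω, Y 0 ω ^ 2 = 1) (hp2 : 2 < p) (hp4 : p ≤ 4)
    (hintp : Integrable (fun ω => |Y 0 ω| ^ p) ℙ) {ε : ℝ} (hε : 0 < ε) :
    Tendsto (fun n : ℕ =>
        (n : ℝ) ^ (p / 2) * (ℙ : Measure Ω).real {ω | truncSqSum Y p n ω ≤ (1 - ε) * n})
      atTop (𝓝 0) := by
  obtain ⟨M, hM, hMp⟩ : ∃ M > 0, ∫ ω, |Y 0 ω| ^ p ≤ M :=
    ⟨_, add_pos_of_nonneg_of_pos (integral_nonneg fun ω => by positivity) one_pos,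
      le_add_of_nonneg_right zero_le_one⟩
  have hY2 : Integrable (fun ω => Y 0 ω ^ 2) ℙ :=
    .of_integral_ne_zero (by rw [hvar]; exact one_ne_zero)
  have hmean : ∀ᶠ n : ℕ in atTop, 1 - ε / 4 ≤ ∫ ω, min (Y 0 ω ^ 2) ((n : ℝ) ^ (2 / p)) :=
    (tendsto_integral_min_sq hY2 ((tendsto_rpow_atTop (by positivity)).comp
      tendsto_natCast_atTop_atTop)).eventually (eventually_ge_nhds (by linarith))
  have htail : ∀ᶠ n : ℕ in atTop, (ℙ : Measure Ω).real {ω | truncSqSum Y p n ω ≤ (1 - ε) * n} ≤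
      exp (-(ε ^ 2 / (16 * M)) * (n : ℝ) ^ (2 - 4 / p)) := by
    filter_upwards [eventually_ge_atTop 1, hmean,
      tendsto_natCast_atTop_atTop.eventually_ge_atTop (4 / ε)] with n hn hmn hn4
    exact measureReal_truncSqSum_le_exp hmeas hindep hident (by linarith) hp4 hintp hM hMp hε hn
      hn4 hmn
  exact squeeze_zero' (.of_forall fun n => by positivity) (htail.mono fun n h => by gcongr)
    (tendsto_natCast_rpow_mul_exp_neg_mul_rpow (div_pos (by positivity) (by linarith))
      (by rw [sub_pos, div_lt_iff₀ (by linarith)]; linarith))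

lemma integral_rpow_div_sum_sq_le (hmeas : ∀ i, Measurable (Y i))
    (hintp : Integrable (fun ω => |Y 0 ω| ^ p) ℙ) (hp : 0 ≤ p) {n : ℕ} (hn : 1 ≤ n) {a : ℝ}
    (ha : 0 < a) :
    ∫ ω, (Y 0 ω ^ 2 / ∑ k ∈ Finset.range n, Y k ω ^ 2) ^ (p / 2) ≤
      (ℙ : Measure Ω).real {ω | truncSqSum Y p n ω ≤ a} + (∫ ω, |Y 0 ω| ^ p) / a ^ (p / 2) := by
  set S := {ω | truncSqSum Y p n ω ≤ a}
  have hS : MeasurableSet S := measurableSet_le (by unfold truncSqSum; fun_prop) measurable_const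
  have hSint : Integrable (S.indicator (1 : Ω → ℝ)) ℙ := (integrable_const 1).indicator hS
  have hbound : ∀ ω, (Y 0 ω ^ 2 / ∑ k ∈ Finset.range n, Y k ω ^ 2) ^ (p / 2) ≤
      S.indicator (1 : Ω → ℝ) ω + |Y 0 ω| ^ p / a ^ (p / 2) := fun ω => by
    simp only [Set.indicator_apply, S, Set.mem_ofPred_eq, Pi.one_apply, ← sq_rpow_div_two]
    exact rpow_div_le_ite_add (sq_nonneg _)
      (Finset.single_le_sum (fun k _ => sq_nonneg (Y k ω)) (Finset.mem_range.2 hn))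
      (truncSqSum_le_sum_sq Y p n ω) ha (by positivity)
  calc ∫ ω, (Y 0 ω ^ 2 / ∑ k ∈ Finset.range n, Y k ω ^ 2) ^ (p / 2)
      ≤ ∫ ω, (S.indicator (1 : Ω → ℝ) ω + |Y 0 ω| ^ p / a ^ (p / 2)) :=
        integral_mono_of_nonneg (.of_forall fun ω => by positivity)
          (hSint.add (hintp.div_const _)) (.of_forall hbound)
    _ = _ := by
        rw [integral_add hSint (hintp.div_const _),
          integral_indicator_one hS, integral_div]

lemma limsup_rpow_mul_integral_le (hmeas : ∀ i, Measurable (Y i))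
    (hindep : iIndepFun Y ℙ) (hident : ∀ i, IdentDistrib (Y i) (Y 0) ℙ ℙ)
    (hvar : ∫ ω, Y 0 ω ^ 2 = 1) (hp2 : 2 < p) (hp4 : p ≤ 4)
    (hintp : Integrable (fun ω => |Y 0 ω| ^ p) ℙ) {ε : ℝ} (hε : 0 < ε) (hε1 : ε < 1) :
    limsup (fun n : ℕ => (n : ℝ) ^ (p / 2) *
        ∫ ω, (Y 0 ω ^ 2 / ∑ k ∈ Finset.range n, Y k ω ^ 2) ^ (p / 2)) atTop ≤
      (∫ ω, |Y 0 ω| ^ p) * (1 - ε) ^ (-(p / 2)) := by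
  set C := (∫ ω, |Y 0 ω| ^ p) * (1 - ε) ^ (-(p / 2))
  have hle : ∀ᶠ n : ℕ in atTop, (n : ℝ) ^ (p / 2) *
        ∫ ω, (Y 0 ω ^ 2 / ∑ k ∈ Finset.range n, Y k ω ^ 2) ^ (p / 2) ≤
      (n : ℝ) ^ (p / 2) * (ℙ : Measure Ω).real {ω | truncSqSum Y p n ω ≤ (1 - ε) * n} + C := by
    filter_upwards [eventually_ge_atTop 1] with n hn
    have hn0 : (0 : ℝ) < n := by exact_mod_cast hn
    have h1ε : 0 < 1 - ε := by linarith
    calc _ ≤ (n : ℝ) ^ (p / 2) * ((ℙ : Measure Ω).real {ω | truncSqSum Y p n ω ≤ (1 - ε) * n} +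
          (∫ ω, |Y 0 ω| ^ p) / ((1 - ε) * n) ^ (p / 2)) := by
          gcongr
          exact integral_rpow_div_sum_sq_le hmeas hintp (by linarith) hn (by positivity)
      _ = _ := by
          rw [mul_rpow h1ε.le hn0.le]
          simp only [C, rpow_neg h1ε.le]
          field_simp
  have hlim : Tendsto (fun n : ℕ => (n : ℝ) ^ (p / 2) *
      (ℙ : Measure Ω).real {ω | truncSqSum Y p n ω ≤ (1 - ε) * n} + C) atTop (𝓝 C) := by
    simpa using (tendsto_rpow_mul_measureReal_truncSqSum_le hmeas hindep hident hvar hp2 hp4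
      hintp hε).add_const C
  calc _ ≤ limsup (fun n : ℕ => (n : ℝ) ^ (p / 2) *
        (ℙ : Measure Ω).real {ω | truncSqSum Y p n ω ≤ (1 - ε) * n} + C) atTop :=
        limsup_le_limsup hle (isCoboundedUnder_le_of_le atTop fun n => by positivity)
          hlim.isBoundedUnder_le
    _ = C := hlim.limsup_eq

end TruncatedSums

theorem stmt_15 {Ω : Type*} [MeasureSpace Ω] [IsProbabilityMeasure (ℙ : Measure Ω)]
    (Y : ℕ → Ω → ℝ)
    (hmeas : ∀ i, Measurable (Y i))
    (hindep : iIndepFun Y ℙ)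
    (hident : ∀ i, IdentDistrib (Y i) (Y 0) ℙ ℙ)
    (hvar : ∫ ω, (Y 0 ω) ^ 2 = 1)
    (p : ℝ) (hp : p ∈ Set.Ioc (2 : ℝ) 3)
    (hintp : Integrable (fun ω => |Y 0 ω| ^ p) ℙ) :
    Filter.limsup (fun n : ℕ =>
        (n : ℝ) ^ (p / 2) *
          ∫ ω, ((Y 0 ω) ^ 2 / ∑ k ∈ Finset.range n, (Y k ω) ^ 2) ^ (p / 2)) atTop ≤
      ∫ ω, |Y 0 ω| ^ p := by
  obtain ⟨hp2, hp3⟩ := hp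
  have hlim : Tendsto (fun ε : ℝ => (∫ ω, |Y 0 ω| ^ p) * (1 - ε) ^ (-(p / 2))) (𝓝[>] 0)
      (𝓝 (∫ ω, |Y 0 ω| ^ p)) := by
    have : ContinuousAt (fun ε : ℝ => (∫ ω, |Y 0 ω| ^ p) * (1 - ε) ^ (-(p / 2))) 0 :=
      continuousAt_const.mul ((continuousAt_const.sub continuousAt_id).rpow_const (by simp))
    simpa using this.tendsto.mono_left nhdsWithin_le_nhds
  refine ge_of_tendsto hlim ?_
  filter_upwards [Ioo_mem_nhdsGT one_pos] with ε ⟨hε, hε1⟩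
  exact limsup_rpow_mul_integral_le hmeas hindep hident hvar hp2 (by linarith) hintp hε hε1
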